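/- arXiv:2507.23417 — 3 statements merged into one kernel-verified Lean document; each statement's English description precedes it below -/
import Mathlib

section
/- Let Ω ⊂ ℝⁿ be a measurable set and let p, q : Ω → ℝ be measurable functions with 1 < essinf_Ω p ≤ esssup_Ω p < ∞ and 1/p(x) + 1/q(x) = 1 for a.e. x ∈ Ω. Then for all measurable u, v : Ω → ℝ such that the Luxemburg norms ‖u‖_p and ‖v‖_q are finite, the Hölder-type inequality ∫_Ω |u(x) v(x)| dx ≤ 2 ‖u‖_p ‖v‖_q holds. -/
open MeasureTheory ENNReal Filter

/-- The Luxemburg norm `‖u‖_p = inf { λ > 0 : ∫_Ω (|u(x)|/λ)^{p(x)} dx ≤ 1 }`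
(with `inf ∅ = +∞`, realized as `sInf ∅ = ⊤` in `ℝ≥0∞`). -/
noncomputable def luxemburgNorm {n : ℕ} (Ω : Set (EuclideanSpace ℝ (Fin n)))
    (p u : EuclideanSpace ℝ (Fin n) → ℝ) : ℝ≥0∞ :=
  sInf {l : ℝ≥0∞ | 0 < l ∧ l ≠ ⊤ ∧
    (∫⁻ x in Ω, (ENNReal.ofReal |u x| / l) ^ (p x)) ≤ 1}

/-! A pointwise Young inequality `ab ≤ a^p + b^q` gives `∫ fg ≤ ∫ f^p + ∫ g^q`. Normalising
`u` and `v` by admissible levels `λ`, `μ` of their Luxemburg norms makes both modulars at most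
`1`, so `∫ |uv| ≤ 2λμ`; taking the infimum over `λ` and `μ` gives the inequality. -/

/-- If `f` is not a.e. bounded below, `essInf f μ` is the junk value `sSup ∅ = 0`. -/
theorem ae_lt_of_lt_essInf_of_nonneg {α : Type*} [MeasurableSpace α] {μ : Measure α}
    {f : α → ℝ} {x : ℝ} (hx0 : 0 ≤ x) (hx : x < essInf f μ) : ∀ᵐ y ∂μ, x < f y := by
  rw [essInf_eq_sSup] at hx
  have hne : {a : ℝ | μ {y | f y < a} = 0}.Nonempty := by
    by_contra h
    rw [Set.not_nonempty_iff_eq_empty.mp h, Real.sSup_empty] at hx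
    linarith
  obtain ⟨a, ha, hxa⟩ := exists_lt_of_lt_csSup hne hx
  filter_upwards [measure_eq_zero_iff_ae_notMem.mp ha] with y hy
  exact hxa.trans_le (not_lt.mp hy)

theorem ENNReal.mul_le_rpow_add_rpow (a b : ℝ≥0∞) {p q : ℝ} (hpq : p.HolderConjugate q) :
    a * b ≤ a ^ p + b ^ q := by
  have div_le (c : ℝ≥0∞) {r : ℝ} (hr : 1 < r) : c / ENNReal.ofReal r ≤ c :=
    ENNReal.div_le_of_le_mul (le_mul_of_one_le_right' (ENNReal.one_le_ofReal.mpr hr.le))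
  calc a * b ≤ a ^ p / ENNReal.ofReal p + b ^ q / ENNReal.ofReal q :=
        ENNReal.young_inequality a b hpq
    _ ≤ a ^ p + b ^ q := add_le_add (div_le _ hpq.lt) (div_le _ hpq.symm.lt)

theorem lintegral_mul_le_lintegral_rpow_add {α : Type*} [MeasurableSpace α] {μ : Measure α}
    {p q : α → ℝ} {f g : α → ℝ≥0∞} (hpq : ∀ᵐ x ∂μ, (p x).HolderConjugate (q x))
    (hf : AEMeasurable (fun x ↦ f x ^ p x) μ) :
    ∫⁻ x, f x * g x ∂μ ≤ ∫⁻ x, f x ^ p x ∂μ + ∫⁻ x, g x ^ q x ∂μ := by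
  rw [← lintegral_add_left' hf]
  refine lintegral_mono_ae ?_
  filter_upwards [hpq] with x hx
  exact ENNReal.mul_le_rpow_add_rpow (f x) (g x) hx

theorem ENNReal.le_mul_sInf_mul_sInf {a c : ℝ≥0∞} {S T : Set ℝ≥0∞} (hc : c ≠ ⊤)
    (hS : sInf S ≠ ⊤) (hT : sInf T ≠ ⊤) (h : ∀ s ∈ S, ∀ t ∈ T, a ≤ c * s * t) :
    a ≤ c * sInf S * sInf T := by
  obtain ⟨s, hs, hs_lt⟩ := sInf_lt_iff.mp hS.lt_top
  obtain ⟨t, ht, ht_lt⟩ := sInf_lt_iff.mp hT.lt_top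
  have : Nonempty S := ⟨⟨s, hs⟩⟩
  rw [sInf_eq_iInf', sInf_eq_iInf', ENNReal.mul_iInf fun h ↦ absurd h hc]
  exact ENNReal.le_iInf_mul_iInf ⟨⟨s, hs⟩, mul_ne_top hc hs_lt.ne⟩ ⟨⟨t, ht⟩, ht_lt.ne⟩
    fun s t ↦ h s s.2 t t.2

section Luxemburg

variable {n : ℕ}

def luxemburgAdmissible (Ω : Set (EuclideanSpace ℝ (Fin n)))
    (p u : EuclideanSpace ℝ (Fin n) → ℝ) : Set ℝ≥0∞ :=
  {l | 0 < l ∧ l ≠ ⊤ ∧ (∫⁻ x in Ω, (ENNReal.ofReal |u x| / l) ^ (p x)) ≤ 1}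

theorem luxemburgNorm_eq_sInf (Ω : Set (EuclideanSpace ℝ (Fin n)))
    (p u : EuclideanSpace ℝ (Fin n) → ℝ) :
    luxemburgNorm Ω p u = sInf (luxemburgAdmissible Ω p u) := rfl

theorem lintegral_abs_mul_le_of_mem_luxemburgAdmissible {Ω : Set (EuclideanSpace ℝ (Fin n))}
    {p q u v : EuclideanSpace ℝ (Fin n) → ℝ}
    (hp : Measurable p) (hu : Measurable u)
    (hpq : ∀ᵐ x ∂(volume.restrict Ω), (p x).HolderConjugate (q x)) {l m : ℝ≥0∞}
    (hl : l ∈ luxemburgAdmissible Ω p u) (hm : m ∈ luxemburgAdmissible Ω q v) :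
    (∫⁻ x in Ω, ENNReal.ofReal |u x * v x|) ≤ 2 * l * m := by
  obtain ⟨hl0, hl_top, hl_mod⟩ := hl
  obtain ⟨hm0, hm_top, hm_mod⟩ := hm
  set f := fun x ↦ ENNReal.ofReal |u x| / l
  set g := fun x ↦ ENNReal.ofReal |v x| / m
  have hfg (x) : ENNReal.ofReal |u x * v x| = f x * g x * (l * m) := by
    have hu_eq : f x * l = ENNReal.ofReal |u x| := ENNReal.div_mul_cancel hl0.ne' hl_top
    have hv_eq : g x * m = ENNReal.ofReal |v x| := ENNReal.div_mul_cancel hm0.ne' hm_top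
    rw [abs_mul, ENNReal.ofReal_mul (abs_nonneg _), ← hu_eq, ← hv_eq]
    ring
  have hf : Measurable fun x ↦ f x ^ p x := (hu.abs.ennreal_ofReal.div_const l).pow hp
  calc (∫⁻ x in Ω, ENNReal.ofReal |u x * v x|)
      = (∫⁻ x in Ω, f x * g x) * (l * m) := by
        simp_rw [hfg]
        exact lintegral_mul_const' _ _ (mul_ne_top hl_top hm_top)
    _ ≤ (1 + 1) * (l * m) := by
        gcongr
        exact (lintegral_mul_le_lintegral_rpow_add hpq hf.aemeasurable).trans
          (add_le_add hl_mod hm_mod)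
    _ = 2 * l * m := by rw [one_add_one_eq_two, mul_assoc]

end Luxemburg

theorem variable_exponent_holder_general {n : ℕ}
    (Ω : Set (EuclideanSpace ℝ (Fin n)))
    (p q : EuclideanSpace ℝ (Fin n) → ℝ)
    (hp : Measurable p)
    (hp1 : 1 < essInf p (volume.restrict Ω))
    (hconj : ∀ᵐ x ∂(volume.restrict Ω), 1 / p x + 1 / q x = 1)
    (u v : EuclideanSpace ℝ (Fin n) → ℝ)
    (hu : Measurable u)
    (hufin : luxemburgNorm Ω p u ≠ ⊤) (hvfin : luxemburgNorm Ω q v ≠ ⊤) :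
    (∫⁻ x in Ω, ENNReal.ofReal |u x * v x|) ≤
      2 * luxemburgNorm Ω p u * luxemburgNorm Ω q v := by
  have hpq : ∀ᵐ x ∂(volume.restrict Ω), (p x).HolderConjugate (q x) := by
    filter_upwards [ae_lt_of_lt_essInf_of_nonneg zero_le_one hp1, hconj] with x hp1x hconjx
    exact Real.holderConjugate_iff.mpr ⟨hp1x, by simpa only [one_div] using hconjx⟩
  simp only [luxemburgNorm_eq_sInf] at hufin hvfin ⊢
  exact ENNReal.le_mul_sInf_mul_sInf ENNReal.ofNat_ne_top hufin hvfin fun l hl m hm ↦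
    lintegral_abs_mul_le_of_mem_luxemburgAdmissible hp hu hpq hl hm

/-- Hölder's inequality for variable exponents: if `1/p(x) + 1/q(x) = 1` a.e. on `Ω` and
`‖u‖_p, ‖v‖_q` are finite, then `∫_Ω |u v| dx ≤ 2 ‖u‖_p ‖v‖_q`. -/
theorem variable_exponent_holder {n : ℕ}
    (Ω : Set (EuclideanSpace ℝ (Fin n))) (hΩ : MeasurableSet Ω)
    (p q : EuclideanSpace ℝ (Fin n) → ℝ)
    (hp : Measurable p) (hq : Measurable q)
    (hp1 : 1 < essInf p (volume.restrict Ω))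
    (hple : essInf p (volume.restrict Ω) ≤ essSup p (volume.restrict Ω))
    (hconj : ∀ᵐ x ∂(volume.restrict Ω), 1 / p x + 1 / q x = 1)
    (u v : EuclideanSpace ℝ (Fin n) → ℝ)
    (hu : Measurable u) (hv : Measurable v)
    (hufin : luxemburgNorm Ω p u ≠ ⊤) (hvfin : luxemburgNorm Ω q v ≠ ⊤) :
    (∫⁻ x in Ω, ENNReal.ofReal |u x * v x|) ≤
      2 * luxemburgNorm Ω p u * luxemburgNorm Ω q v :=
  variable_exponent_holder_general Ω p q hp hp1 hconj u v hu hufin hvfin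
end

section
/- Let Ω ⊂ ℝⁿ be a measurable set of finite Lebesgue measure |Ω|, let 0 < ε < 1, and let p, q : Ω → ℝ be measurable functions with 1 ≤ p(x) ≤ q(x) ≤ p(x) + ε for a.e. x ∈ Ω. Then for every measurable function g : Ω → ℝ with finite Luxemburg norm ‖g‖_q, one has ‖g‖_p ≤ (ε |Ω| + ε^{−ε}) ‖g‖_q. -/
open MeasureTheory ENNReal Filter

/-- Key real inequality: `s^p ≤ ε^{-ε} s^q + ε`. -/
lemma key_real_ineq (ε : ℝ) (hε0 : 0 < ε) (hε1 : ε < 1) (s p q : ℝ) (hs : 0 ≤ s)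
    (hp1 : 1 ≤ p) (hpq : p ≤ q) (hqp : q ≤ p + ε) :
    s ^ p ≤ ε ^ (-ε) * s ^ q + ε := by
  have hεpow1 : 1 ≤ ε ^ (-ε) :=
    Real.one_le_rpow_of_pos_of_le_one_of_nonpos hε0 hε1.le (by linarith)
  have hsq : 0 ≤ s ^ q := Real.rpow_nonneg hs q
  rcases le_or_gt 1 s with hs1 | hs1
  · have h1 : s ^ p ≤ s ^ q := Real.rpow_le_rpow_of_exponent_le hs1 hpq
    nlinarith
  rcases eq_or_lt_of_le hs with rfl | hs0
  · rw [Real.zero_rpow (by linarith : p ≠ 0)]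
    positivity
  rcases le_or_gt s ε with hsε | hsε
  · have h1 : s ^ p ≤ s ^ (1:ℝ) := Real.rpow_le_rpow_of_exponent_ge hs0 hs1.le hp1
    rw [Real.rpow_one] at h1
    have : 0 ≤ ε ^ (-ε) * s ^ q := by positivity
    linarith
  · have e1 : s ^ p = s ^ q * s ^ (p - q) := by
      rw [← Real.rpow_add hs0]; ring_nf
    have e2 : s ^ (p - q) ≤ s ^ (-ε) :=
      Real.rpow_le_rpow_of_exponent_ge hs0 hs1.le (by linarith)
    have e3 : s ^ (-ε) ≤ ε ^ (-ε) := by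
      rw [Real.rpow_neg hs, Real.rpow_neg hε0.le]
      have h4 : ε ^ ε ≤ s ^ ε := Real.rpow_le_rpow hε0.le hsε.le hε0.le
      have h5 : 0 < ε ^ ε := Real.rpow_pos_of_pos hε0 ε
      exact inv_anti₀ h5 h4
    have : s ^ p ≤ s ^ q * (ε ^ (-ε)) := by
      rw [e1]
      exact mul_le_mul_of_nonneg_left (e2.trans e3) hsq
    nlinarith

/-- ENNReal version of the pointwise inequality. -/
lemma key_ennreal_ineq (ε : ℝ) (hε0 : 0 < ε) (hε1 : ε < 1) (t : ℝ≥0∞) (ht : t ≠ ⊤)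
    (p q : ℝ) (hp1 : 1 ≤ p) (hpq : p ≤ q) (hqp : q ≤ p + ε) :
    t ^ p ≤ ENNReal.ofReal (ε ^ (-ε)) * t ^ q + ENNReal.ofReal ε := by
  have hs : (0:ℝ) ≤ t.toReal := ENNReal.toReal_nonneg
  have hrepr : t = ENNReal.ofReal t.toReal := (ENNReal.ofReal_toReal ht).symm
  rw [hrepr, ENNReal.ofReal_rpow_of_nonneg hs (by linarith),
    ENNReal.ofReal_rpow_of_nonneg hs (by linarith), ← ENNReal.ofReal_mul (by positivity),
    ← ENNReal.ofReal_add (by positivity) hε0.le]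
  exact ENNReal.ofReal_le_ofReal (key_real_ineq ε hε0 hε1 _ p q hs hp1 hpq hqp)

/-- If `1 ≤ p ≤ q ≤ p + ε` a.e. on a finite-measure set `Ω`, with `0 < ε < 1`, then for any
measurable `g` with finite Luxemburg norm `‖g‖_q` one has
`‖g‖_p ≤ (ε|Ω| + ε^{-ε}) ‖g‖_q`. -/
theorem luxemburg_norm_embedding_close_exponents {n : ℕ}
    (Ω : Set (EuclideanSpace ℝ (Fin n))) (hΩ : MeasurableSet Ω)
    (hΩfin : volume Ω < ⊤)
    (ε : ℝ) (hε0 : 0 < ε) (hε1 : ε < 1)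
    (p q : EuclideanSpace ℝ (Fin n) → ℝ)
    (hp : Measurable p) (hq : Measurable q)
    (hpq : ∀ᵐ x ∂(volume.restrict Ω), 1 ≤ p x ∧ p x ≤ q x ∧ q x ≤ p x + ε)
    (g : EuclideanSpace ℝ (Fin n) → ℝ) (hg : Measurable g)
    (hgfin : luxemburgNorm Ω q g ≠ ⊤) :
    luxemburgNorm Ω p g ≤
      (ENNReal.ofReal ε * volume Ω + ENNReal.ofReal (ε ^ (-ε))) * luxemburgNorm Ω q g := by
  set C : ℝ≥0∞ := ENNReal.ofReal ε * volume Ω + ENNReal.ofReal (ε ^ (-ε)) with hC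
  have hεpow1 : (1:ℝ) ≤ ε ^ (-ε) :=
    Real.one_le_rpow_of_pos_of_le_one_of_nonpos hε0 hε1.le (by linarith)
  have hC1 : 1 ≤ C := le_add_left (by
    simpa using ENNReal.ofReal_le_ofReal hεpow1 : (1:ℝ≥0∞) ≤ ENNReal.ofReal (ε ^ (-ε)))
  have hC0 : C ≠ 0 := by
    intro h; rw [h] at hC1; exact (by simp at hC1)
  have hCtop : C ≠ ⊤ := by
    rw [hC]
    exact ENNReal.add_ne_top.2 ⟨ENNReal.mul_ne_top ENNReal.ofReal_ne_top hΩfin.ne,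
      ENNReal.ofReal_ne_top⟩
  -- membership transfer
  have key : ∀ l : ℝ≥0∞, (0 < l ∧ l ≠ ⊤ ∧
      (∫⁻ x in Ω, (ENNReal.ofReal |g x| / l) ^ (q x)) ≤ 1) →
      (0 < C * l ∧ C * l ≠ ⊤ ∧
      (∫⁻ x in Ω, (ENNReal.ofReal |g x| / (C * l)) ^ (p x)) ≤ 1) := by
    rintro l ⟨hl0, hltop, hlint⟩
    refine ⟨ENNReal.mul_pos hC0 hl0.ne', ENNReal.mul_ne_top hCtop hltop, ?_⟩
    set f : EuclideanSpace ℝ (Fin n) → ℝ≥0∞ := fun x => ENNReal.ofReal |g x| / l with hf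
    have hfmeas : Measurable f :=
      (ENNReal.measurable_ofReal.comp hg.abs).div measurable_const
    have hffin : ∀ x, f x ≠ ⊤ := fun x =>
      (ENNReal.div_lt_top ENNReal.ofReal_ne_top hl0.ne').ne
    -- step 1 : ∫ f^p ≤ C
    have step1 : (∫⁻ x in Ω, f x ^ (p x)) ≤ C := by
      have hmono : (∫⁻ x in Ω, f x ^ (p x)) ≤
          ∫⁻ x in Ω, (ENNReal.ofReal (ε ^ (-ε)) * f x ^ (q x) + ENNReal.ofReal ε) := by
        refine lintegral_mono_ae (hpq.mono fun x hx => ?_)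
        exact key_ennreal_ineq ε hε0 hε1 (f x) (hffin x) (p x) (q x) hx.1 hx.2.1 hx.2.2
      rw [lintegral_add_right _ measurable_const,
        lintegral_const_mul' _ _ ENNReal.ofReal_ne_top, setLIntegral_const] at hmono
      calc (∫⁻ x in Ω, f x ^ (p x))
          ≤ ENNReal.ofReal (ε ^ (-ε)) * (∫⁻ x in Ω, f x ^ (q x)) + ENNReal.ofReal ε * volume Ω :=
            hmono
        _ ≤ ENNReal.ofReal (ε ^ (-ε)) * 1 + ENNReal.ofReal ε * volume Ω := by
            gcongr
        _ = C := by rw [mul_one, hC, add_comm]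
    -- step 2 : pointwise (f/(C))^p ≤ f^p / C
    have hrw : ∀ x, ENNReal.ofReal |g x| / (C * l) = f x / C := by
      intro x
      rw [hf]
      simp only [div_eq_mul_inv]
      rw [ENNReal.mul_inv (Or.inl hC0) (Or.inl hCtop)]
      ring
    have step2 : (∫⁻ x in Ω, (ENNReal.ofReal |g x| / (C * l)) ^ (p x)) ≤
        ∫⁻ x in Ω, C⁻¹ * (f x ^ (p x)) := by
      refine lintegral_mono_ae (hpq.mono fun x hx => ?_)
      rw [hrw x, ENNReal.div_rpow_of_nonneg _ _ (by linarith [hx.1] : (0:ℝ) ≤ p x)]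
      have hCp : C ≤ C ^ (p x) := by
        conv_lhs => rw [← ENNReal.rpow_one C]
        exact ENNReal.rpow_le_rpow_of_exponent_le hC1 hx.1
      calc f x ^ p x / C ^ p x ≤ f x ^ p x / C := ENNReal.div_le_div_left hCp _
        _ = C⁻¹ * f x ^ p x := by rw [div_eq_mul_inv, mul_comm]
    rw [lintegral_const_mul' _ _ (by simpa using hC0 : C⁻¹ ≠ ⊤)] at step2
    calc (∫⁻ x in Ω, (ENNReal.ofReal |g x| / (C * l)) ^ (p x))
        ≤ C⁻¹ * (∫⁻ x in Ω, f x ^ (p x)) := step2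
      _ ≤ C⁻¹ * C := by gcongr
      _ = 1 := ENNReal.inv_mul_cancel hC0 hCtop
  -- conclude with infima
  unfold luxemburgNorm at hgfin ⊢
  set Sq := {l : ℝ≥0∞ | 0 < l ∧ l ≠ ⊤ ∧
    (∫⁻ x in Ω, (ENNReal.ofReal |g x| / l) ^ (q x)) ≤ 1} with hSq
  have hne : Sq.Nonempty := by
    by_contra h
    rw [Set.not_nonempty_iff_eq_empty] at h
    rw [h, sInf_empty] at hgfin
    exact hgfin rfl
  have : Nonempty Sq := hne.to_subtype
  have hsq : sInf Sq = ⨅ l : Sq, (l : ℝ≥0∞) := sInf_eq_iInf' Sq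
  rw [hsq, ENNReal.mul_iInf (f := fun l : Sq => (l : ℝ≥0∞)) (fun hCt _ => absurd hCt hCtop)]
  refine le_iInf fun l => ?_
  exact sInf_le (key l l.2)
end

section
/- Let Ω ⊂ ℝⁿ be a measurable set of finite Lebesgue measure |Ω|, let 0 < ε < 1, and let p, q : Ω → ℝ be measurable functions with 1 ≤ p(x) ≤ q(x) ≤ p(x) + ε for a.e. x ∈ Ω. Then for every measurable function f : Ω → ℝ one has (as an inequality in [0,∞]): ∫_Ω p(x)^{−1} |f(x)|^{p(x)} dx ≤ ε |Ω| + ε^{−ε} (1 + ε) ∫_Ω q(x)^{−1} |f(x)|^{q(x)} dx. -/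
open MeasureTheory ENNReal Filter

/-!
The estimate holds pointwise, for `t = |f x|`, and is then integrated. For `t ≤ ε` the left side
is at most `t ^ p ≤ t ≤ ε`. For `t > ε` write `p⁻¹ t ^ p = (q / p) · t ^ (p - q) · q⁻¹ t ^ q`:
here `q / p ≤ 1 + ε` because `p ≥ 1`, and `t ^ (p - q) ≤ ε ^ (p - q) ≤ ε ^ (-ε)` because
`-ε ≤ p - q ≤ 0` and `ε < 1`.
-/

namespace Real

lemma inv_mul_rpow_le_of_le {t ε p : ℝ} (ht : 0 ≤ t) (htε : t ≤ ε) (hε1 : ε ≤ 1) (hp : 1 ≤ p) :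
    p⁻¹ * t ^ p ≤ ε := calc
  p⁻¹ * t ^ p ≤ 1 * t ^ p := by gcongr; exact inv_le_one_of_one_le₀ hp
  _ ≤ t := by rw [one_mul]; exact rpow_le_self_of_le_one ht (htε.trans hε1) hp
  _ ≤ ε := htε

lemma rpow_neg_le_rpow_neg_self {t ε δ : ℝ} (hε0 : 0 < ε) (hε1 : ε ≤ 1) (hεt : ε ≤ t)
    (hδ0 : 0 ≤ δ) (hδε : δ ≤ ε) : t ^ (-δ) ≤ ε ^ (-ε) := calc
  t ^ (-δ) ≤ ε ^ (-δ) := rpow_le_rpow_of_nonpos hε0 hεt (neg_nonpos.mpr hδ0)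
  _ ≤ ε ^ (-ε) := rpow_le_rpow_of_exponent_ge hε0 hε1 (neg_le_neg hδε)

lemma inv_mul_rpow_eq {t p q : ℝ} (ht : 0 < t) (hp : p ≠ 0) (hq : q ≠ 0) :
    p⁻¹ * t ^ p = q / p * t ^ (-(q - p)) * (q⁻¹ * t ^ q) := by
  have hsplit : t ^ p = t ^ (-(q - p)) * t ^ q := by
    rw [← rpow_add ht, neg_sub, sub_add_cancel]
  rw [hsplit]
  field_simp

lemma inv_mul_rpow_le_add_inv_mul_rpow {t ε p q : ℝ} (ht : 0 ≤ t) (hε0 : 0 < ε) (hε1 : ε ≤ 1)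
    (hp : 1 ≤ p) (hpq : p ≤ q) (hqε : q ≤ p + ε) :
    p⁻¹ * t ^ p ≤ ε + ε ^ (-ε) * (1 + ε) * (q⁻¹ * t ^ q) := by
  have hp0 : 0 < p := one_pos.trans_le hp
  have hq0 : 0 < q := hp0.trans_le hpq
  rcases le_or_gt t ε with htε | hεt
  · have : 0 ≤ ε ^ (-ε) * (1 + ε) * (q⁻¹ * t ^ q) := by positivity
    linarith [inv_mul_rpow_le_of_le ht htε hε1 hp]
  have hratio : q / p ≤ 1 + ε := by
    rw [div_le_iff₀ hp0]
    nlinarith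
  have hpow : t ^ (-(q - p)) ≤ ε ^ (-ε) :=
    rpow_neg_le_rpow_neg_self hε0 hε1 hεt.le (by linarith) (by linarith)
  calc p⁻¹ * t ^ p = q / p * t ^ (-(q - p)) * (q⁻¹ * t ^ q) :=
        inv_mul_rpow_eq (hε0.trans hεt) hp0.ne' hq0.ne'
    _ ≤ (1 + ε) * ε ^ (-ε) * (q⁻¹ * t ^ q) := by gcongr
    _ ≤ ε + ε ^ (-ε) * (1 + ε) * (q⁻¹ * t ^ q) := by linarith

end Real

theorem weighted_modular_estimate_close_exponents_general {n : ℕ}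
    (Ω : Set (EuclideanSpace ℝ (Fin n)))
    (ε : ℝ) (hε0 : 0 < ε) (hε1 : ε < 1)
    (p q : EuclideanSpace ℝ (Fin n) → ℝ)
    (hpq : ∀ᵐ x ∂(volume.restrict Ω), 1 ≤ p x ∧ p x ≤ q x ∧ q x ≤ p x + ε)
    (f : EuclideanSpace ℝ (Fin n) → ℝ) :
    (∫⁻ x in Ω, ENNReal.ofReal ((p x)⁻¹ * |f x| ^ (p x))) ≤
      ENNReal.ofReal ε * volume Ω +
        ENNReal.ofReal (ε ^ (-ε) * (1 + ε)) *
          ∫⁻ x in Ω, ENNReal.ofReal ((q x)⁻¹ * |f x| ^ (q x)) := calc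
  (∫⁻ x in Ω, ENNReal.ofReal ((p x)⁻¹ * |f x| ^ (p x)))
      ≤ ∫⁻ x in Ω, (ENNReal.ofReal ε +
          ENNReal.ofReal (ε ^ (-ε) * (1 + ε)) * ENNReal.ofReal ((q x)⁻¹ * |f x| ^ (q x))) := by
    refine lintegral_mono_ae ?_
    filter_upwards [hpq] with x ⟨hp, hpq, hqε⟩
    have hpoint := Real.inv_mul_rpow_le_add_inv_mul_rpow (abs_nonneg (f x)) hε0 hε1.le hp hpq hqε
    have hC : 0 ≤ ε ^ (-ε) * (1 + ε) := by positivity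
    have hq0 : 0 ≤ (q x)⁻¹ := inv_nonneg.mpr (by linarith)
    rw [← ENNReal.ofReal_mul hC, ← ENNReal.ofReal_add hε0.le (by positivity)]
    exact ENNReal.ofReal_le_ofReal hpoint
  _ = ENNReal.ofReal ε * volume Ω +
        ENNReal.ofReal (ε ^ (-ε) * (1 + ε)) *
          ∫⁻ x in Ω, ENNReal.ofReal ((q x)⁻¹ * |f x| ^ (q x)) := by
    rw [lintegral_add_left measurable_const, lintegral_const_mul' _ _ ofReal_ne_top,
      lintegral_const, Measure.restrict_apply_univ]

/-- If `1 ≤ p ≤ q ≤ p + ε` a.e. on a finite-measure set `Ω`, with `0 < ε < 1`, then for any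
measurable `f` one has, in `[0,∞]`,
`∫_Ω p(x)⁻¹|f|^{p(x)} dx ≤ ε|Ω| + ε^{-ε}(1+ε) ∫_Ω q(x)⁻¹|f|^{q(x)} dx`. -/
theorem weighted_modular_estimate_close_exponents {n : ℕ}
    (Ω : Set (EuclideanSpace ℝ (Fin n))) (hΩ : MeasurableSet Ω)
    (hΩfin : volume Ω < ⊤)
    (ε : ℝ) (hε0 : 0 < ε) (hε1 : ε < 1)
    (p q : EuclideanSpace ℝ (Fin n) → ℝ)
    (hp : Measurable p) (hq : Measurable q)
    (hpq : ∀ᵐ x ∂(volume.restrict Ω), 1 ≤ p x ∧ p x ≤ q x ∧ q x ≤ p x + ε)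
    (f : EuclideanSpace ℝ (Fin n) → ℝ) (hf : Measurable f) :
    (∫⁻ x in Ω, ENNReal.ofReal ((p x)⁻¹ * |f x| ^ (p x))) ≤
      ENNReal.ofReal ε * volume Ω +
        ENNReal.ofReal (ε ^ (-ε) * (1 + ε)) *
          ∫⁻ x in Ω, ENNReal.ofReal ((q x)⁻¹ * |f x| ^ (q x)) :=
  weighted_modular_estimate_close_exponents_general Ω ε hε0 hε1 p q hpq f
end
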